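/- (Weyl-chamber reflection enumeration, d walkers, type A) For strictly decreasing integer vectors μ, λ ∈ W_d, the exponential generating function of the number Z_d(N; μ, λ) of N-step nearest-neighbor walks from μ to λ staying in W_d is Σ_{N≥0} Z_d(N;μ,λ) x^N/N! = det(I_{λ_i − μ_j}(2x))_{1≤i,j≤d}, where I_k is the modified Bessel function. -/

import Mathlib

/-!
Both sides obey the same recursion in the endpoint `λ`. Removing the last step shows
`Z(N + 1; μ, λ) = ∑ Z(N; μ, λ ∓ eᵢ)` for `λ ∈ W_d`. On the other side
`I_k(2x)' = I_{k-1}(2x) + I_{k+1}(2x)`, and a determinant differentiates row by row, so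
`det(I_{λᵢ - μⱼ})' = ∑ det(I_{(λ ∓ eᵢ)ᵢ - μⱼ})`. A step from `λ ∈ W_d` that leaves `W_d` makes two
coordinates equal: there the walk count is `0` and the determinant has two equal rows. At `N = 0` both
sides are `δ_{λμ}`, so induction on `N` over weakly decreasing `λ` identifies the coefficients.
-/

/-- The modified Bessel function `I_k(2x)` of integer order `k`, as a formal power series:
`I_k(2x) = Σ_{m ≥ max(0, −k)} x^{2m+k} / (m!(m+k)!)` (equal to `Σ_{m≥0} x^{2m+|k|}/(m!(m+|k|)!)`). -/
noncomputable def besselI (k : ℤ) : PowerSeries ℚ :=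
  PowerSeries.mk fun N =>
    if 2 ∣ ((N : ℤ) - k) ∧ k ≤ (N : ℤ) ∧ -k ≤ (N : ℤ) then
      1 / ((Nat.factorial (((N : ℤ) - k) / 2).toNat) *
           (Nat.factorial (((N : ℤ) + k) / 2).toNat))
    else 0

/-- The number `Z_d(N; μ, λ)` of `N`-step nearest-neighbor walks from `μ` to `λ` in the
Weyl lattice `W_d` of strictly decreasing integer vectors. -/
noncomputable def Zd (d N : ℕ) (μ lam : Fin d → ℤ) : ℕ :=
  Set.ncard {p : Fin (N + 1) → Fin d → ℤ |
    p 0 = μ ∧ p (Fin.last N) = lam ∧ (∀ k, StrictAnti (p k)) ∧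
      ∀ k : Fin N, ∃ i : Fin d,
        p k.succ = p k.castSucc + Pi.single i 1 ∨ p k.succ = p k.castSucc - Pi.single i 1}

open PowerSeries Matrix Nat

noncomputable def invFactProd (a b : ℤ) : ℚ :=
  if 0 ≤ a ∧ 0 ≤ b then ((a.toNat)! * (b.toNat)! : ℚ)⁻¹ else 0

theorem invFactProd_comm (a b : ℤ) : invFactProd a b = invFactProd b a := by
  simp only [invFactProd, and_comm, mul_comm]

theorem mul_invFactProd (a b : ℤ) : a * invFactProd a b = invFactProd (a - 1) b := by
  by_cases ha : 1 ≤ a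
  · obtain ⟨m, rfl⟩ : ∃ m : ℕ, a = m + 1 := ⟨(a - 1).toNat, by omega⟩
    by_cases hb : 0 ≤ b
    · lift b to ℕ using hb
      simp only [invFactProd, add_sub_cancel_right, Int.toNat_natCast]
      rw [if_pos ⟨by omega, by omega⟩, if_pos ⟨by omega, by omega⟩,
        show ((m : ℤ) + 1).toNat = m + 1 by omega, factorial_succ]
      push_cast
      field_simp
    · simp [invFactProd, hb]
  · rw [show invFactProd (a - 1) b = 0 from if_neg (by omega)]
    rcases eq_or_ne a 0 with rfl | ha0
    · rw [Int.cast_zero, zero_mul]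
    · rw [show invFactProd a b = 0 from if_neg (by omega), mul_zero]

theorem add_mul_invFactProd (a b : ℤ) :
    (a + b) * invFactProd a b = invFactProd a (b - 1) + invFactProd (a - 1) b := by
  have hb := mul_invFactProd b a
  rw [invFactProd_comm b a, invFactProd_comm (b - 1) a] at hb
  rw [add_mul, mul_invFactProd, hb, add_comm]

theorem coeff_besselI (n : ℕ) {a b : ℤ} (hn : (n : ℤ) = a + b) :
    coeff n (besselI (b - a)) = invFactProd a b := by
  have hsub : (n : ℤ) - (b - a) = 2 * a := by omega
  have hadd : (n : ℤ) + (b - a) = 2 * b := by omega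
  rw [besselI, coeff_mk, hsub, hadd, Int.mul_ediv_cancel_left _ two_ne_zero,
    Int.mul_ediv_cancel_left _ two_ne_zero, invFactProd, one_div]
  exact if_congr (by omega) rfl rfl

theorem coeff_besselI_of_not_dvd {n : ℕ} {k : ℤ} (h : ¬ 2 ∣ (n : ℤ) - k) :
    coeff n (besselI k) = 0 := by
  rw [besselI, coeff_mk, if_neg (fun h' => h h'.1)]

theorem constantCoeff_besselI (k : ℤ) : constantCoeff (besselI k) = if k = 0 then 1 else 0 := by
  rw [← coeff_zero_eq_constantCoeff_apply, besselI, coeff_mk]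
  split_ifs with h hk hk <;> first | omega | simp_all

theorem derivative_besselI (k : ℤ) :
    d⁄dX ℚ (besselI k) = besselI (k - 1) + besselI (k + 1) := by
  ext n
  rw [coeff_derivative, map_add]
  by_cases hpar : 2 ∣ (n : ℤ) + 1 - k
  · obtain ⟨a, ha⟩ := hpar
    obtain ⟨b, rfl⟩ : ∃ b, k = b - a := ⟨k + a, by ring⟩
    rw [show b - a - 1 = (b - 1) - a by ring, show b - a + 1 = b - (a - 1) by ring,
      coeff_besselI (n + 1) (a := a) (b := b) (by push_cast; omega),
      coeff_besselI n (a := a) (b := b - 1) (by omega),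
      coeff_besselI n (a := a - 1) (b := b) (by omega), mul_comm,
      show (n : ℚ) + 1 = ((a + b : ℤ) : ℚ) by exact_mod_cast (by omega : (n : ℤ) + 1 = a + b)]
    exact_mod_cast add_mul_invFactProd a b
  · rw [coeff_besselI_of_not_dvd (by push_cast; omega), coeff_besselI_of_not_dvd (by omega),
      coeff_besselI_of_not_dvd (by omega), zero_mul, add_zero]

namespace Derivation

variable {R A : Type*} [CommSemiring R] [CommRing A] [Algebra R A] (D : Derivation R A A)

theorem leibniz_prod {ι : Type*} [DecidableEq ι] (s : Finset ι) (f : ι → A) :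
    D (∏ i ∈ s, f i) = ∑ i ∈ s, D (f i) * ∏ j ∈ s.erase i, f j := by
  induction s using Finset.induction_on with
  | empty => simp
  | insert a s ha ih =>
    rw [Finset.prod_insert ha, D.leibniz, smul_eq_mul, smul_eq_mul, ih, Finset.sum_insert ha,
      Finset.erase_insert ha, Finset.mul_sum, mul_comm (∏ i ∈ s, f i), add_comm]
    congr 1
    refine Finset.sum_congr rfl fun i hi => ?_
    rw [Finset.erase_insert_of_ne (ne_of_mem_of_not_mem hi ha).symm,
      Finset.prod_insert (fun h => ha (Finset.mem_of_mem_erase h))]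
    ring

variable {n : Type*} [Fintype n] [DecidableEq n]

theorem map_det_eq_sum_updateCol (M : Matrix n n A) :
    D M.det = ∑ j, (M.updateCol j fun i => D (M i j)).det := by
  simp only [Matrix.det_apply]
  rw [map_sum, Finset.sum_comm]
  refine Finset.sum_congr rfl fun σ _ => ?_
  rw [Units.smul_def, map_zsmul, leibniz_prod, Finset.smul_sum]
  refine Finset.sum_congr rfl fun j _ => ?_
  rw [← Units.smul_def, ← Finset.mul_prod_erase Finset.univ _ (Finset.mem_univ j)]
  congr 2
  · simp
  · refine Finset.prod_congr rfl fun i hi => ?_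
    rw [Matrix.updateCol_apply, if_neg (Finset.ne_of_mem_erase hi)]

theorem map_det_eq_sum_updateRow (M : Matrix n n A) :
    D M.det = ∑ i, (M.updateRow i fun j => D (M i j)).det := by
  rw [← Matrix.det_transpose M, map_det_eq_sum_updateCol]
  refine Finset.sum_congr rfl fun i _ => ?_
  rw [Matrix.updateCol_transpose, Matrix.det_transpose]
  rfl

end Derivation

theorem Matrix.det_of_ite_eq_of_strictAnti {n α R : Type*} [Fintype n] [DecidableEq n]
    [LinearOrder n] [Preorder α] [DecidableEq α] [CommRing R] {μ ν : n → α}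
    (hμ : StrictAnti μ) (hν : StrictAnti ν) :
    (of fun i j => if ν i = μ j then (1 : R) else 0).det = if ν = μ then 1 else 0 := by
  split_ifs with h
  · subst h
    rw [show (of fun i j => if ν i = ν j then (1 : R) else 0) = 1 by
      ext i j; simp [one_apply, hν.injective.eq_iff], det_one]
  · rw [det_apply]
    refine Finset.sum_eq_zero fun σ _ => ?_
    suffices ∃ i, ν (σ i) ≠ μ i by
      obtain ⟨i, hi⟩ := this
      rw [Finset.prod_eq_zero (Finset.mem_univ i) (by simp [hi]), smul_zero]
    by_contra! hσ
    refine h ((hν.range_inj hμ).mp ?_)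
    rw [← funext hσ]
    exact (σ.surjective.range_comp ν).symm

section Walks

variable {V ι : Type*} [AddGroup V] (W : Set V) (step : ι → V)

def walksIn (N : ℕ) (μ ν : V) : Set (Fin (N + 1) → V) :=
  {p | p 0 = μ ∧ p (Fin.last N) = ν ∧ (∀ k, p k ∈ W) ∧
    ∀ k : Fin N, ∃ x, p k.succ = p k.castSucc + step x}

variable {W step} {N : ℕ} {μ ν : V}

theorem walksIn_eq_empty (hν : ν ∉ W) : walksIn W step N μ ν = ∅ :=
  Set.eq_empty_of_forall_notMem fun _ ⟨_, hlast, hW, _⟩ => hν (hlast ▸ hW _)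

theorem ncard_walksIn_zero [DecidableEq V] (hμ : μ ∈ W) :
    (walksIn W step 0 μ ν).ncard = if ν = μ then 1 else 0 := by
  split_ifs with h
  · subst h
    rw [Set.ncard_eq_one]
    refine ⟨fun _ => ν, Set.eq_singleton_iff_unique_mem.mpr ⟨?_, ?_⟩⟩
    · exact ⟨rfl, rfl, fun _ => hμ, fun k => k.elim0⟩
    · exact fun p hp => funext fun k => Subsingleton.elim (α := Fin 1) k 0 ▸ hp.1
  · rw [show walksIn W step 0 μ ν = ∅ from
      Set.eq_empty_of_forall_notMem fun p hp => h (hp.2.1.symm.trans hp.1), Set.ncard_empty]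

theorem snoc_mem_walksIn {p : Fin (N + 1) → V} {x : ι} (hν : ν ∈ W)
    (hp : p ∈ walksIn W step N μ (ν - step x)) :
    Fin.snoc p ν ∈ walksIn W step (N + 1) μ ν := by
  obtain ⟨h0, hlast, hW, hstep⟩ := hp
  refine ⟨?_, Fin.snoc_last _ _, Fin.lastCases ?_ fun k => ?_, Fin.lastCases ?_ fun k => ?_⟩
  · rw [← Fin.castSucc_zero, Fin.snoc_castSucc, h0]
  · rwa [Fin.snoc_last]
  · rw [Fin.snoc_castSucc]; exact hW k
  · refine ⟨x, ?_⟩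
    rw [Fin.succ_last, Fin.snoc_last, Fin.snoc_castSucc, hlast, sub_add_cancel]
  · rw [Fin.succ_castSucc, Fin.snoc_castSucc, Fin.snoc_castSucc]
    exact hstep k

theorem init_mem_walksIn {P : Fin (N + 2) → V} {x : ι} (hP : P ∈ walksIn W step (N + 1) μ ν)
    (hx : P (Fin.last N).succ = P (Fin.last N).castSucc + step x) :
    Fin.init P ∈ walksIn W step N μ (ν - step x) := by
  obtain ⟨h0, hlast, hW, hstep⟩ := hP
  refine ⟨h0, ?_, fun k => hW _, fun k => ?_⟩
  · rw [Fin.init, eq_sub_iff_add_eq, ← hx, Fin.succ_last, hlast]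
  · rw [Fin.init, Fin.init, ← Fin.succ_castSucc]
    exact hstep k.castSucc

def snocWalk (hν : ν ∈ W) (q : Σ x, walksIn W step N μ (ν - step x)) :
    walksIn W step (N + 1) μ ν :=
  ⟨Fin.snoc q.2.1 ν, snoc_mem_walksIn hν q.2.2⟩

theorem snocWalk_surjective (hν : ν ∈ W) :
    Function.Surjective (snocWalk (step := step) (N := N) (μ := μ) hν) := by
  rintro ⟨P, hP⟩
  obtain ⟨x, hx⟩ := hP.2.2.2 (Fin.last N)
  refine ⟨⟨x, Fin.init P, init_mem_walksIn hP hx⟩, Subtype.ext ?_⟩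
  simp only [snocWalk, ← hP.2.1, Fin.snoc_init_self]

theorem snocWalk_injective (hstep : Function.Injective step) (hν : ν ∈ W) :
    Function.Injective (snocWalk (step := step) (N := N) (μ := μ) hν) := by
  rintro ⟨x, p, hp⟩ ⟨y, q, hq⟩ h
  simp only [snocWalk, Subtype.mk.injEq, Fin.snoc_inj, and_true] at h
  subst h
  obtain rfl : x = y := hstep (sub_right_injective (hp.2.1.symm.trans hq.2.1))
  rfl

theorem finite_walksIn [Finite ι] (N : ℕ) (μ ν : V) : (walksIn W step N μ ν).Finite := by
  induction N generalizing ν with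
  | zero =>
    refine Set.Subsingleton.finite fun p hp q hq => funext fun k => ?_
    rw [Subsingleton.elim (α := Fin 1) k 0, hp.1, hq.1]
  | succ N ih =>
    by_cases hν : ν ∈ W
    · have := fun x => (ih (ν - step x)).to_subtype
      exact Set.finite_coe_iff.mp (Finite.of_surjective _ (snocWalk_surjective hν))
    · simp [walksIn_eq_empty hν]

theorem ncard_walksIn_succ [Fintype ι] (hstep : Function.Injective step) (hν : ν ∈ W) :
    (walksIn W step (N + 1) μ ν).ncard = ∑ x, (walksIn W step N μ (ν - step x)).ncard := by
  have := fun x => (finite_walksIn (W := W) (step := step) N μ (ν - step x)).to_subtype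
  simp only [← Nat.card_coe_set_eq, ← Nat.card_sigma]
  exact (Nat.card_eq_of_bijective _ ⟨snocWalk_injective hstep hν, snocWalk_surjective hν⟩).symm

end Walks

section WeylChamber

variable {d : ℕ}

def coordStep : Fin d ⊕ Fin d → Fin d → ℤ :=
  Sum.elim (fun i => Pi.single i 1) (fun i => -Pi.single i 1)

theorem coordStep_injective : Function.Injective (coordStep (d := d)) := by
  rintro (i | i) (j | j) h <;> have hi := congrFun h i <;>
    simp only [coordStep, Sum.elim_inl, Sum.elim_inr, Pi.neg_apply, Pi.single_eq_same,
      Pi.single_apply] at hi <;> split_ifs at hi with hij <;> first | omega | rw [hij]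

theorem Zd_eq_ncard_walksIn (N : ℕ) (μ ν : Fin d → ℤ) :
    Zd d N μ ν = (walksIn {v | StrictAnti v} coordStep N μ ν).ncard := by
  simp only [Zd, walksIn, coordStep, Sum.exists, Sum.elim_inl, Sum.elim_inr, ← sub_eq_add_neg,
    ← exists_or, Set.mem_ofPred_eq]

theorem antitone_sub_coordStep {ν : Fin d → ℤ} (hν : StrictAnti ν) (x : Fin d ⊕ Fin d) :
    Antitone (ν - coordStep x) := by
  intro i j hij
  rcases hij.lt_or_eq with hij | rfl
  · have := hν hij
    rcases x with k | k <;> simp only [coordStep, Pi.sub_apply, Sum.elim_inl, Sum.elim_inr,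
      Pi.neg_apply, Pi.single_apply] <;> split_ifs <;> omega
  · exact le_rfl

noncomputable def besselDet (μ ν : Fin d → ℤ) : ℚ⟦X⟧ :=
  (of fun i j => besselI (ν i - μ j)).det

theorem besselDet_update (μ ν : Fin d → ℤ) (i : Fin d) (a : ℤ) :
    besselDet μ (Function.update ν i a) =
      ((of fun k j => besselI (ν k - μ j)).updateRow i fun j => besselI (a - μ j)).det := by
  rw [besselDet]
  congr 1
  ext k j
  by_cases hk : k = i
  · subst hk; simp
  · simp [hk]

theorem sub_coordStep_inl (ν : Fin d → ℤ) (i : Fin d) :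
    ν - coordStep (.inl i) = Function.update ν i (ν i - 1) := by
  ext k
  by_cases hk : k = i
  · subst hk; simp [coordStep]
  · simp [coordStep, hk]

theorem sub_coordStep_inr (ν : Fin d → ℤ) (i : Fin d) :
    ν - coordStep (.inr i) = Function.update ν i (ν i + 1) := by
  ext k
  by_cases hk : k = i
  · subst hk; simp [coordStep]
  · simp [coordStep, hk]

theorem derivative_besselDet (μ ν : Fin d → ℤ) :
    d⁄dX ℚ (besselDet μ ν) = ∑ x, besselDet μ (ν - coordStep x) := by
  rw [besselDet, Derivation.map_det_eq_sum_updateRow, Fintype.sum_sum_type,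
    ← Finset.sum_add_distrib]
  refine Finset.sum_congr rfl fun i _ => ?_
  rw [sub_coordStep_inl, sub_coordStep_inr, besselDet_update, besselDet_update,
    ← det_updateRow_add]
  congr 2
  ext j
  rw [of_apply, derivative_besselI, Pi.add_apply, sub_right_comm, sub_add_eq_add_sub]

theorem besselDet_eq_zero_of_not_injective (μ : Fin d → ℤ) {ν : Fin d → ℤ}
    (hν : ¬ Function.Injective ν) : besselDet μ ν = 0 := by
  obtain ⟨i, j, hij, hne⟩ := Function.not_injective_iff.mp hν
  exact det_zero_of_row_eq hne (funext fun k => by simp [hij])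

theorem constantCoeff_besselDet {μ ν : Fin d → ℤ} (hμ : StrictAnti μ) (hν : StrictAnti ν) :
    constantCoeff (besselDet μ ν) = if ν = μ then 1 else 0 := by
  rw [besselDet, RingHom.map_det, RingHom.mapMatrix_apply, ← det_of_ite_eq_of_strictAnti hμ hν]
  congr 1
  ext i j
  simp [constantCoeff_besselI, sub_eq_zero]

theorem Zd_eq_zero_of_not_injective (N : ℕ) (μ : Fin d → ℤ) {ν : Fin d → ℤ}
    (hν : ¬ Function.Injective ν) : Zd d N μ ν = 0 := by
  rw [Zd_eq_ncard_walksIn, walksIn_eq_empty fun h => hν (StrictAnti.injective h),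
    Set.ncard_empty]

theorem Zd_eq_factorial_mul_coeff_besselDet {μ : Fin d → ℤ} (hμ : StrictAnti μ) (N : ℕ)
    {ν : Fin d → ℤ} (hν : Antitone ν) : (Zd d N μ ν : ℚ) = N ! * coeff N (besselDet μ ν) := by
  induction N generalizing ν with
  | zero =>
    by_cases hinj : Function.Injective ν
    · rw [Zd_eq_ncard_walksIn, ncard_walksIn_zero hμ, coeff_zero_eq_constantCoeff_apply,
        constantCoeff_besselDet hμ (hν.strictAnti_of_injective hinj)]
      simp
    · simp [Zd_eq_zero_of_not_injective, besselDet_eq_zero_of_not_injective, hinj]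
  | succ N ih =>
    by_cases hinj : Function.Injective ν
    · have hν' := hν.strictAnti_of_injective hinj
      rw [Zd_eq_ncard_walksIn, ncard_walksIn_succ coordStep_injective hν', Nat.cast_sum]
      simp only [← Zd_eq_ncard_walksIn, ih (antitone_sub_coordStep hν' _), ← Finset.mul_sum,
        ← map_sum, ← derivative_besselDet, coeff_derivative, factorial_succ]
      push_cast
      ring
    · simp [Zd_eq_zero_of_not_injective, besselDet_eq_zero_of_not_injective, hinj]

end WeylChamber

/-- André–Gessel–Zeilberger reflection enumeration for `d` vicious
random-turns walkers: for strictly decreasing `μ, λ ∈ W_d`,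
`Σ_{N ≥ 0} Z_d(N; μ, λ) x^N/N! = det(I_{λᵢ − μⱼ}(2x))_{1 ≤ i, j ≤ d}`. -/
theorem stmt11 {d : ℕ} (μ lam : Fin d → ℤ) (hμ : StrictAnti μ) (hlam : StrictAnti lam) :
    (PowerSeries.mk fun N => (Zd d N μ lam : ℚ) / N.factorial) =
    Matrix.det (Matrix.of fun i j : Fin d => besselI (lam i - μ j)) := by
  ext N
  rw [coeff_mk, Zd_eq_factorial_mul_coeff_besselDet hμ N hlam.antitone, besselDet]
  field_simp
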